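/- arXiv:1401.1657 — 2 statements merged into one kernel-verified Lean document; each statement's English description precedes it below -/
import Mathlib

section
/- Let f ∈ 𝒪(𝔻, D), F ∈ 𝒪(D, 𝔻), and suppose B := F ∘ f is a Blaschke product of degree m. If B₁ is a Blaschke product of degree k, then the map λ ↦ f(B₁(λ)) is (mk+1)-extremal in D. -/
open Complex Metric Set

noncomputable section

/-- The open unit disc in `ℂ`. -/
def 𝔻 : Set ℂ := Metric.ball 0 1

/-- `B` is a Blaschke product of degree `m` on the unit disc: a unimodular constant
times a product of `m` Möbius factors. -/
def IsBlaschke (m : ℕ) (B : ℂ → ℂ) : Prop :=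
  ∃ (ω : ℂ) (a : Fin m → ℂ), ‖ω‖ = 1 ∧ (∀ j, a j ∈ 𝔻) ∧
    ∀ z ∈ 𝔻, B z = ω * ∏ j, (a j - z) / (1 - (starRingEnd ℂ) (a j) * z)

variable {E : Type*} [NormedAddCommGroup E] [NormedSpace ℂ E]

/-- The interpolation data `lam j ↦ f (lam j)` is extremally solvable (through `f`):
no map holomorphic on a neighbourhood of the closed unit disc with values in `D`
interpolates `f` at the points `lam j`. -/
def ExtSolv (D : Set E) {m : ℕ} (lam : Fin m → ℂ) (f : ℂ → E) : Prop :=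
  ¬ ∃ (U : Set ℂ) (g : ℂ → E), IsOpen U ∧ Metric.closedBall (0 : ℂ) 1 ⊆ U ∧
      DifferentiableOn ℂ g U ∧ (∀ z ∈ U, g z ∈ D) ∧ ∀ j, g (lam j) = f (lam j)

/-- `f : 𝔻 → D` is a weak `m`-extremal with respect to the distinct points `lam`. -/
def IsWeakExtremal (D : Set E) {m : ℕ} (lam : Fin m → ℂ) (f : ℂ → E) : Prop :=
  DifferentiableOn ℂ f 𝔻 ∧ (∀ z ∈ 𝔻, f z ∈ D) ∧ ExtSolv D lam f

/-- `f : 𝔻 → D` is `m`-extremal: for all choices of `m` distinct points of `𝔻` the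
corresponding interpolation data is extremally solvable. -/
def IsMExtremal (D : Set E) (m : ℕ) (f : ℂ → E) : Prop :=
  DifferentiableOn ℂ f 𝔻 ∧ (∀ z ∈ 𝔻, f z ∈ D) ∧
    ∀ lam : Fin m → ℂ, Function.Injective lam → (∀ j, lam j ∈ 𝔻) → ExtSolv D lam f

/-- The Minkowski functional of a set `D`. -/
def mink (D : Set E) (z : E) : ℝ := sInf {t : ℝ | 0 < t ∧ ((t : ℂ))⁻¹ • z ∈ D}

/-- `φ` is a holomorphic automorphism of `D`. -/
def IsAutomorphismOf (D : Set E) (φ : E → E) : Prop :=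
  DifferentiableOn ℂ φ D ∧ Set.MapsTo φ D D ∧
    ∃ ψ : E → E, DifferentiableOn ℂ ψ D ∧ Set.MapsTo ψ D D ∧
      (∀ z ∈ D, ψ (φ z) = z) ∧ (∀ z ∈ D, φ (ψ z) = z)

/-- The group of holomorphic automorphisms of `D` acts transitively. -/
def Homogeneous (D : Set E) : Prop :=
  ∀ z ∈ D, ∀ w ∈ D, ∃ φ : E → E, IsAutomorphismOf D φ ∧ φ z = w

/-- `f` is an `m`-complex geodesic of `D`: there is `F ∈ 𝒪(D, 𝔻)` such that `F ∘ f` is a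
non-constant Blaschke product of degree at most `m - 1`. -/
def IsComplexGeodesicOfOrder (D : Set E) (m : ℕ) (f : ℂ → E) : Prop :=
  DifferentiableOn ℂ f 𝔻 ∧ (∀ z ∈ 𝔻, f z ∈ D) ∧
    ∃ F : E → ℂ, DifferentiableOn ℂ F D ∧ (∀ z ∈ D, F z ∈ 𝔻) ∧
      ∃ k : ℕ, 1 ≤ k ∧ k ≤ m - 1 ∧ ∃ B : ℂ → ℂ, IsBlaschke k B ∧
        ∀ z ∈ 𝔻, F (f z) = B z

/-- The sub-mean-value property on circles, for a real function on a subset of `ℂ`. -/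
def SubmeanOn (u : ℂ → ℝ) (S : Set ℂ) : Prop :=
  ∀ (c : ℂ) (r : ℝ), 0 < r → Metric.closedBall c r ⊆ S →
    u c ≤ (2 * Real.pi)⁻¹ * ∫ θ in (0:ℝ)..(2 * Real.pi), u (c + r * Complex.exp (θ * Complex.I))

/-- `u` is plurisubharmonic on `D`: upper semicontinuous and submean on every complex line. -/
def PlurisubharmonicOn (u : E → ℝ) (D : Set E) : Prop :=
  UpperSemicontinuousOn u D ∧
    ∀ (z v : E), SubmeanOn (fun w : ℂ => u (z + w • v)) {w : ℂ | z + w • v ∈ D}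

/-- Hartogs pseudoconvexity: `- log dist(·, ∂D)` is plurisubharmonic on `D`. -/
def IsPseudoconvex (D : Set E) : Prop :=
  PlurisubharmonicOn (fun z => - Real.log (Metric.infDist z Dᶜ)) D

/-!
Write a Blaschke product of degree `d` as `ω P / P^*`, where `P^*` is the reflection of `P` in
the unit circle. In this form, post-composition with a Blaschke factor gives again a Blaschke
product of degree `d`, and a zero at `a ∈ 𝔻` can be divided out by the factor vanishing at `a`,
lowering the degree by one. Hence `F ∘ f ∘ B₁` is a Blaschke product of degree `m k`.

If `g`, holomorphic near the closed disc with values in `D`, agreed with `f ∘ B₁` at `m k + 1`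
points, then `F ∘ g` would map the closed disc into `𝔻` and agree with that Blaschke product at
these points. Schur's algorithm lowers the degree: move the common value at the first node to `0`
by a Blaschke factor and divide both sides by the factor vanishing at that node; by the maximum
principle the quotient of `F ∘ g` still maps the closed disc into `𝔻`. In degree `0` the
Blaschke product is a unimodular constant, which a map into `𝔻` cannot take.
-/

open Polynomial ComplexConjugate

namespace Polynomial

/-- The reflection `z ^ d * conj (P (1 / conj z))` of `P` in the unit circle. -/
def conjReflect (d : ℕ) (P : ℂ[X]) : ℂ[X] := (P.map (starRingEnd ℂ)).reflect d

theorem coeff_conjReflect (d : ℕ) (P : ℂ[X]) (i : ℕ) :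
    (P.conjReflect d).coeff i = conj (P.coeff (revAt d i)) := by
  simp [conjReflect, coeff_reflect, coeff_map]

theorem natDegree_conjReflect_le {d : ℕ} {P : ℂ[X]} (h : P.natDegree ≤ d) :
    (P.conjReflect d).natDegree ≤ d := by
  refine natDegree_le_iff_coeff_eq_zero.mpr fun i hi => ?_
  rw [coeff_conjReflect, revAt_eq_self_of_lt hi, coeff_eq_zero_of_natDegree_lt (h.trans_lt hi),
    map_zero]

@[simp]
theorem conjReflect_conjReflect (d : ℕ) (P : ℂ[X]) : (P.conjReflect d).conjReflect d = P := by
  ext i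
  simp [coeff_conjReflect]

theorem conjReflect_sub (d : ℕ) (P Q : ℂ[X]) :
    (P - Q).conjReflect d = P.conjReflect d - Q.conjReflect d := by
  ext i
  simp [coeff_conjReflect]

theorem conjReflect_C_mul (d : ℕ) (a : ℂ) (P : ℂ[X]) :
    (C a * P).conjReflect d = C (conj a) * P.conjReflect d := by
  ext i
  simp [coeff_conjReflect]

theorem conjReflect_mul {d e : ℕ} {P Q : ℂ[X]} (hP : P.natDegree ≤ d) (hQ : Q.natDegree ≤ e) :
    (P * Q).conjReflect (d + e) = P.conjReflect d * Q.conjReflect e := by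
  rw [conjReflect, Polynomial.map_mul,
    reflect_mul _ _ (natDegree_map_le.trans hP) (natDegree_map_le.trans hQ)]
  rfl

@[simp]
theorem conjReflect_C (a : ℂ) : (C a).conjReflect 0 = C (conj a) := by
  simp [conjReflect]

theorem conjReflect_X_sub_C (a : ℂ) : (X - C a).conjReflect 1 = 1 - C (conj a) * X := by
  simp [conjReflect, reflect_sub, reflect_C]

theorem norm_eval_conjReflect_of_norm_eq_one {d : ℕ} {P : ℂ[X]} (hP : P.natDegree ≤ d) {z : ℂ}
    (hz : ‖z‖ = 1) : ‖(P.conjReflect d).eval z‖ = ‖P.eval z‖ := by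
  have hzz : conj z * z = 1 := by
    rw [mul_comm, mul_conj, normSq_eq_norm_sq, hz]
    norm_num
  let _ : Invertible (conj z) := invertibleOfRightInverse _ _ hzz
  have key := eval₂_reflect_mul_pow (RingHom.id ℂ) (conj z) d (P.map (starRingEnd ℂ))
    (natDegree_map_le.trans hP)
  rw [invOf_eq_right_inv hzz, eval₂_map, RingHom.id_comp, eval₂_at_apply] at key
  calc ‖(P.conjReflect d).eval z‖ = ‖(P.conjReflect d).eval z * conj z ^ d‖ := by simp [hz]
    _ = ‖P.eval z‖ := by rw [conjReflect, eval, key]; simp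

theorem norm_eval_le_norm_eval_conjReflect {d : ℕ} {P : ℂ[X]} (hP : P.natDegree ≤ d)
    (hP' : ∀ z ∈ closedBall (0 : ℂ) 1, (P.conjReflect d).eval z ≠ 0) {z : ℂ}
    (hz : z ∈ closedBall (0 : ℂ) 1) : ‖P.eval z‖ ≤ ‖(P.conjReflect d).eval z‖ := by
  have hd : DiffContOnCl ℂ (fun z => P.eval z / (P.conjReflect d).eval z) (ball 0 1) := by
    refine DifferentiableOn.diffContOnCl ?_
    rw [closure_ball 0 one_ne_zero]
    exact P.differentiable.differentiableOn.div
      (P.conjReflect d).differentiable.differentiableOn hP'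
  have hle := Complex.norm_le_of_forall_mem_frontier_norm_le isBounded_ball hd (C := 1)
    (fun w hw => by
      rw [frontier_ball 0 one_ne_zero, mem_sphere_zero_iff_norm] at hw
      rw [norm_div, norm_eval_conjReflect_of_norm_eq_one hP hw]
      exact div_self_le_one _)
    (by rwa [closure_ball 0 one_ne_zero])
  rwa [norm_div, div_le_one (norm_pos_iff.mpr (hP' z hz))] at hle

end Polynomial

theorem mem_𝔻 {z : ℂ} : z ∈ 𝔻 ↔ ‖z‖ < 1 := mem_ball_zero_iff

theorem mapsTo_𝔻_of_forall_sphere {h : ℂ → ℂ} (hh : DifferentiableOn ℂ h (closedBall 0 1))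
    (hs : ∀ z ∈ sphere (0 : ℂ) 1, ‖h z‖ < 1) : MapsTo h (closedBall 0 1) 𝔻 := by
  rw [← closure_ball 0 one_ne_zero] at hh ⊢
  obtain ⟨z₀, hz₀, hmax⟩ := Complex.exists_mem_frontier_isMaxOn_norm isBounded_ball
    ⟨0, mem_ball_self one_pos⟩ hh.diffContOnCl
  rw [frontier_ball 0 one_ne_zero] at hz₀
  exact fun z hz => mem_𝔻.mpr ((hmax hz).out.trans_lt (hs z₀ hz₀))

theorem AnalyticOnNhd.dslope {𝕜 F : Type*} [NontriviallyNormedField 𝕜] [NormedAddCommGroup F]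
    [NormedSpace 𝕜 F] {f : 𝕜 → F} {s : Set 𝕜} (hf : AnalyticOnNhd 𝕜 f s) (a : 𝕜) :
    AnalyticOnNhd 𝕜 (dslope f a) s := by
  intro z hz
  rcases eq_or_ne z a with rfl | hza
  · obtain ⟨p, hp⟩ := hf z hz
    exact hp.has_fpower_series_dslope_fslope.analyticAt
  · refine AnalyticAt.congr ?_ (dslope_eventuallyEq_slope_of_ne f hza).symm
    have : AnalyticAt 𝕜 (fun b => (b - a)⁻¹ • (f b - f a)) z :=
      ((analyticAt_id.sub analyticAt_const).inv (sub_ne_zero.mpr hza)).smul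
        ((hf z hz).sub analyticAt_const)
    simpa [slope_fun_def] using this

def blaschkeFactor (a z : ℂ) : ℂ := (a - z) / (1 - conj a * z)

@[simp]
theorem blaschkeFactor_self (a : ℂ) : blaschkeFactor a a = 0 := by
  simp [blaschkeFactor]

theorem one_sub_conj_mul_ne_zero {a z : ℂ} (ha : ‖a‖ < 1) (hz : ‖z‖ ≤ 1) :
    1 - conj a * z ≠ 0 := by
  refine sub_ne_zero.mpr fun h => ?_
  have : ‖conj a * z‖ < 1 := by
    rw [norm_mul, RCLike.norm_conj]
    nlinarith [norm_nonneg a, norm_nonneg z]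
  simp [← h] at this

theorem blaschkeFactor_ne_zero {a z : ℂ} (ha : ‖a‖ < 1) (hz : ‖z‖ ≤ 1) (hza : z ≠ a) :
    blaschkeFactor a z ≠ 0 :=
  div_ne_zero (sub_ne_zero.mpr hza.symm) (one_sub_conj_mul_ne_zero ha hz)

theorem normSq_one_sub_conj_mul_sub_normSq_sub (a z : ℂ) :
    normSq (1 - conj a * z) - normSq (a - z) = (1 - normSq a) * (1 - normSq z) := by
  simp only [normSq_apply, sub_re, sub_im, mul_re, mul_im, one_re, one_im, conj_re, conj_im]
  ring

theorem norm_blaschkeFactor_lt_one {a z : ℂ} (ha : ‖a‖ < 1) (hz : ‖z‖ < 1) :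
    ‖blaschkeFactor a z‖ < 1 := by
  have hden := one_sub_conj_mul_ne_zero ha hz.le
  rw [blaschkeFactor, norm_div, div_lt_one (norm_pos_iff.mpr hden), ← sq_lt_sq₀ (by positivity)
    (by positivity), ← normSq_eq_norm_sq, ← normSq_eq_norm_sq, ← sub_pos,
    normSq_one_sub_conj_mul_sub_normSq_sub, normSq_eq_norm_sq, normSq_eq_norm_sq]
  have := norm_nonneg a
  have := norm_nonneg z
  apply mul_pos <;> nlinarith

theorem norm_blaschkeFactor_of_norm_eq_one {a z : ℂ} (ha : ‖a‖ < 1) (hz : ‖z‖ = 1) :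
    ‖blaschkeFactor a z‖ = 1 := by
  have hden := one_sub_conj_mul_ne_zero ha hz.le
  rw [blaschkeFactor, norm_div, div_eq_one_iff_eq (norm_ne_zero_iff.mpr hden), eq_comm,
    ← sq_eq_sq₀ (norm_nonneg _) (norm_nonneg _), ← normSq_eq_norm_sq, ← normSq_eq_norm_sq,
    ← sub_eq_zero, normSq_one_sub_conj_mul_sub_normSq_sub, normSq_eq_norm_sq z, hz]
  ring

theorem analyticAt_blaschkeFactor {a z : ℂ} (ha : ‖a‖ < 1) (hz : ‖z‖ ≤ 1) :
    AnalyticAt ℂ (blaschkeFactor a) z :=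
  (analyticAt_const.sub analyticAt_id).div
    (analyticAt_const.sub (analyticAt_const.mul analyticAt_id)) (one_sub_conj_mul_ne_zero ha hz)

theorem exists_analyticOnNhd_eq_blaschkeFactor_mul {g : ℂ → ℂ} {a : ℂ}
    (hg : AnalyticOnNhd ℂ g (closedBall 0 1)) (hg𝔻 : MapsTo g (closedBall 0 1) 𝔻) (ha : a ∈ 𝔻)
    (hga : g a = 0) :
    ∃ g₁ : ℂ → ℂ, AnalyticOnNhd ℂ g₁ (closedBall 0 1) ∧ MapsTo g₁ (closedBall 0 1) 𝔻 ∧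
      ∀ z ∈ closedBall (0 : ℂ) 1, g z = blaschkeFactor a z * g₁ z := by
  rw [mem_𝔻] at ha
  set g₁ : ℂ → ℂ := fun z => -(1 - conj a * z) * dslope g a z
  have hg₁ : AnalyticOnNhd ℂ g₁ (closedBall 0 1) := fun z hz =>
    (analyticAt_const.sub (analyticAt_const.mul analyticAt_id)).neg.mul (hg.dslope a z hz)
  have hfac : ∀ z ∈ closedBall (0 : ℂ) 1, g z = blaschkeFactor a z * g₁ z := by
    intro z hz
    have hden := one_sub_conj_mul_ne_zero ha (mem_closedBall_zero_iff.mp hz)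
    have := sub_smul_dslope g a z
    rw [hga, sub_zero, smul_eq_mul] at this
    rw [← this, blaschkeFactor, div_mul_eq_mul_div, eq_div_iff hden]
    ring
  refine ⟨g₁, hg₁, mapsTo_𝔻_of_forall_sphere hg₁.differentiableOn fun z hz => ?_, hfac⟩
  have hz' := mem_sphere_zero_iff_norm.mp hz
  have hgz := mem_𝔻.mp (hg𝔻 (sphere_subset_closedBall hz))
  rwa [hfac z (sphere_subset_closedBall hz), norm_mul, norm_blaschkeFactor_of_norm_eq_one ha hz',
    one_mul] at hgz

/-- A Blaschke product of degree `d` written as `ω P / P^*` with `P^* = P.conjReflect d`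
(nonvanishing of `P^*` at `0` forces `deg P = d`). -/
def IsBlaschkeQuotient (d : ℕ) (φ : ℂ → ℂ) : Prop :=
  ∃ (ω : ℂ) (P : ℂ[X]), ‖ω‖ = 1 ∧ P.natDegree ≤ d ∧
    (∀ z ∈ closedBall (0 : ℂ) 1, (P.conjReflect d).eval z ≠ 0) ∧
    ∀ z ∈ 𝔻, φ z = ω * P.eval z / (P.conjReflect d).eval z

namespace IsBlaschkeQuotient

variable {d e : ℕ} {φ ψ : ℂ → ℂ}

theorem congr (hφ : IsBlaschkeQuotient d φ) (h : EqOn φ ψ 𝔻) : IsBlaschkeQuotient d ψ := by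
  obtain ⟨ω, P, hω, hP, hP', hφ⟩ := hφ
  exact ⟨ω, P, hω, hP, hP', fun z hz => (h hz).symm.trans (hφ z hz)⟩

theorem const {ω : ℂ} (hω : ‖ω‖ = 1) : IsBlaschkeQuotient 0 fun _ => ω := by
  have h1 : (1 : ℂ[X]).conjReflect 0 = 1 := by simpa using conjReflect_C 1
  exact ⟨ω, 1, hω, by simp, by simp [h1], by simp [h1]⟩

protected theorem id : IsBlaschkeQuotient 1 id := by
  have hX : (X : ℂ[X]).conjReflect 1 = 1 := by simpa using conjReflect_X_sub_C 0
  exact ⟨1, X, norm_one, by simp, by simp [hX], by simp [hX]⟩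

theorem mul (hφ : IsBlaschkeQuotient d φ) (hψ : IsBlaschkeQuotient e ψ) :
    IsBlaschkeQuotient (d + e) fun z => φ z * ψ z := by
  obtain ⟨ω, P, hω, hP, hP', hφ⟩ := hφ
  obtain ⟨ν, Q, hν, hQ, hQ', hψ⟩ := hψ
  refine ⟨ω * ν, P * Q, by simp [hω, hν], natDegree_mul_le.trans (add_le_add hP hQ),
    fun z hz => ?_, fun z hz => ?_⟩
  · rw [conjReflect_mul hP hQ, eval_mul]
    exact mul_ne_zero (hP' z hz) (hQ' z hz)
  · dsimp only
    rw [hφ z hz, hψ z hz, conjReflect_mul hP hQ, eval_mul, eval_mul]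
    ring

theorem prod {ι : Type*} (s : Finset ι) {φ : ι → ℂ → ℂ}
    (h : ∀ i ∈ s, IsBlaschkeQuotient e (φ i)) :
    IsBlaschkeQuotient (s.card * e) fun z => ∏ i ∈ s, φ i z := by
  induction s using Finset.cons_induction with
  | empty => simpa using const norm_one
  | cons i s hi ih =>
    rw [Finset.card_cons, add_one_mul, add_comm]
    simp_rw [Finset.prod_cons]
    exact (h i (Finset.mem_cons_self i s)).mul (ih fun j hj => h j (Finset.mem_cons_of_mem hj))

theorem blaschkeFactor_comp (hφ : IsBlaschkeQuotient d φ) {a : ℂ} (ha : ‖a‖ < 1) :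
    IsBlaschkeQuotient d fun z => blaschkeFactor a (φ z) := by
  obtain ⟨ω, P, hω, hP, hP', hφ⟩ := hφ
  set Q := P.conjReflect d
  have hωω : conj ω * ω = 1 := by
    rw [mul_comm, mul_conj, normSq_eq_norm_sq, hω]
    norm_num
  have hR : (C a * Q - C ω * P).conjReflect d = C (conj a) * P - C (conj ω) * Q := by
    rw [conjReflect_sub, conjReflect_C_mul, conjReflect_C_mul, conjReflect_conjReflect]
  have hR' : ∀ z ∈ closedBall (0 : ℂ) 1, conj a * P.eval z - conj ω * Q.eval z ≠ 0 := by
    intro z hz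
    refine sub_ne_zero.mpr (ne_of_apply_ne norm (ne_of_lt ?_))
    rw [norm_mul, norm_mul, RCLike.norm_conj, RCLike.norm_conj, hω, one_mul]
    calc ‖a‖ * ‖P.eval z‖ ≤ ‖a‖ * ‖Q.eval z‖ :=
          mul_le_mul_of_nonneg_left (norm_eval_le_norm_eval_conjReflect hP hP' hz) (norm_nonneg a)
      _ < ‖Q.eval z‖ := mul_lt_of_lt_one_left (norm_pos_iff.mpr (hP' z hz)) ha
  -- `(a - ω P / Q) / (1 - conj a * ω P / Q) = -conj ω * (a Q - ω P) / (conj a * P - conj ω * Q)`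
  refine ⟨-conj ω, C a * Q - C ω * P, by simp [hω], ?_, fun z hz => ?_, fun z hz => ?_⟩
  · exact (natDegree_sub_le _ _).trans (max_le ((natDegree_C_mul_le _ _).trans
      (natDegree_conjReflect_le hP)) ((natDegree_C_mul_le _ _).trans hP))
  · simpa [hR] using hR' z hz
  · have hden := hR' z (ball_subset_closedBall hz)
    have hQz := hP' z (ball_subset_closedBall hz)
    have hden' : Q.eval z - conj a * ω * P.eval z ≠ 0 := by
      contrapose! hden
      linear_combination (-conj ω) * hden - conj a * P.eval z * hωω
    simp only [hR, hφ z hz, blaschkeFactor, eval_sub, eval_mul, eval_C]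
    field_simp
    rw [← neg_div, div_eq_div_iff (by contrapose! hden'; linear_combination hden')
      (by contrapose! hden; linear_combination hden)]
    linear_combination (-(a * Q.eval z - ω * P.eval z) * P.eval z * conj a) * hωω

theorem exists_eq_blaschkeFactor_mul (hψ : IsBlaschkeQuotient (d + 1) ψ) {a : ℂ} (ha : a ∈ 𝔻)
    (hψa : ψ a = 0) :
    ∃ ψ₁ : ℂ → ℂ, IsBlaschkeQuotient d ψ₁ ∧ ∀ z ∈ 𝔻, ψ z = blaschkeFactor a z * ψ₁ z := by
  obtain ⟨ω, P, hω, hP, hP', hψ⟩ := hψ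
  have hPa : P.IsRoot a := by
    have hω0 : ω ≠ 0 := norm_ne_zero_iff.mp (by simp [hω])
    simpa [hψ a ha, hω0, hP' a (ball_subset_closedBall ha)] using hψa
  obtain ⟨P₁, rfl⟩ := dvd_iff_isRoot.mpr hPa
  have hP₁ : P₁.natDegree ≤ d := by
    rcases eq_or_ne P₁ 0 with rfl | h0
    · simp
    rw [(monic_X_sub_C a).natDegree_mul' h0, natDegree_X_sub_C] at hP
    omega
  have hsplit :
      ((X - C a) * P₁).conjReflect (d + 1) = (1 - C (conj a) * X) * P₁.conjReflect d := by
    rw [add_comm, conjReflect_mul (natDegree_X_sub_C a).le hP₁, conjReflect_X_sub_C]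
  refine ⟨fun z => -ω * P₁.eval z / (P₁.conjReflect d).eval z,
    ⟨-ω, P₁, by simp [hω], hP₁, fun z hz => ?_, fun _ _ => rfl⟩, fun z hz => ?_⟩
  · have := hP' z hz
    rw [hsplit, eval_mul] at this
    exact right_ne_zero_of_mul this
  · have := hP' z (ball_subset_closedBall hz)
    rw [hsplit, eval_mul] at this
    have hden := left_ne_zero_of_mul this
    simp only [eval_sub, eval_one, eval_mul, eval_C, eval_X] at hden
    rw [hψ z hz, hsplit, blaschkeFactor]
    simp only [eval_sub, eval_one, eval_mul, eval_C, eval_X]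
    field_simp
    ring

theorem norm_apply_eq_one (hφ : IsBlaschkeQuotient 0 φ) {z : ℂ} (hz : z ∈ 𝔻) : ‖φ z‖ = 1 := by
  obtain ⟨ω, P, hω, hP, hP', hφ⟩ := hφ
  obtain ⟨c, rfl⟩ := natDegree_eq_zero.mp (Nat.le_zero.mp hP)
  have hc : c ≠ 0 := by simpa using hP' 0 (mem_closedBall_self zero_le_one)
  simp [hφ z hz, hω, hc]

theorem differentiableOn (hφ : IsBlaschkeQuotient d φ) : DifferentiableOn ℂ φ 𝔻 := by
  obtain ⟨ω, P, -, -, hP', hφ⟩ := hφ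
  refine DifferentiableOn.congr ?_ hφ
  exact ((differentiable_const ω).mul P.differentiable).differentiableOn.div
    (P.conjReflect d).differentiable.differentiableOn fun z hz => hP' z (ball_subset_closedBall hz)

theorem exists_apply_ne (hφ : IsBlaschkeQuotient d φ) {h : ℂ → ℂ}
    (hh : AnalyticOnNhd ℂ h (closedBall 0 1)) (hh𝔻 : MapsTo h (closedBall 0 1) 𝔻)
    {lam : Fin (d + 1) → ℂ} (hlam : Function.Injective lam) (hlam𝔻 : ∀ j, lam j ∈ 𝔻) :
    ∃ j, h (lam j) ≠ φ (lam j) := by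
  induction d generalizing φ h with
  | zero =>
    refine ⟨0, fun heq => ?_⟩
    have := mem_𝔻.mp (hh𝔻 (ball_subset_closedBall (hlam𝔻 0)))
    rw [heq, hφ.norm_apply_eq_one (hlam𝔻 0)] at this
    exact lt_irrefl _ this
  | succ d ih =>
    by_contra! heq
    have ha := mem_𝔻.mp (hlam𝔻 0)
    have hw : ‖h (lam 0)‖ < 1 := mem_𝔻.mp (hh𝔻 (mem_closedBall_zero_iff.mpr ha.le))
    obtain ⟨ψ, hψ, hφψ⟩ := (hφ.blaschkeFactor_comp hw).exists_eq_blaschkeFactor_mul (hlam𝔻 0)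
      (by rw [← heq 0]; exact blaschkeFactor_self _)
    obtain ⟨h₁, hh₁, hh₁𝔻, hhh₁⟩ := exists_analyticOnNhd_eq_blaschkeFactor_mul
      (g := fun z => blaschkeFactor (h (lam 0)) (h z))
      (fun z hz => (analyticAt_blaschkeFactor hw (mem_𝔻.mp (hh𝔻 hz)).le).comp (hh z hz))
      (fun z hz => mem_𝔻.mpr (norm_blaschkeFactor_lt_one hw (mem_𝔻.mp (hh𝔻 hz))))
      (hlam𝔻 0) (blaschkeFactor_self _)
    obtain ⟨j, hj⟩ := ih hψ hh₁ hh₁𝔻 (hlam.comp (Fin.succ_injective _)) fun j => hlam𝔻 j.succ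
    have hz := hlam𝔻 j.succ
    refine hj (mul_left_cancel₀ (blaschkeFactor_ne_zero ha (mem_𝔻.mp hz).le
      (hlam.ne (Fin.succ_ne_zero j))) ?_)
    rw [Function.comp_apply, ← hhh₁ _ (ball_subset_closedBall hz), ← hφψ _ hz, heq j.succ]

end IsBlaschkeQuotient

namespace IsBlaschke

variable {m k : ℕ} {B : ℂ → ℂ}

theorem comp_isBlaschkeQuotient (hB : IsBlaschke m B) {φ : ℂ → ℂ}
    (hφ : IsBlaschkeQuotient k φ) (hφ𝔻 : MapsTo φ 𝔻 𝔻) : IsBlaschkeQuotient (m * k) (B ∘ φ) := by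
  obtain ⟨ω, a, hω, ha, hB⟩ := hB
  have := (IsBlaschkeQuotient.const hω).mul
    (IsBlaschkeQuotient.prod Finset.univ fun j _ => hφ.blaschkeFactor_comp (mem_𝔻.mp (ha j)))
  rw [zero_add, Finset.card_univ, Fintype.card_fin] at this
  exact this.congr fun z hz => (hB _ (hφ𝔻 hz)).symm

theorem isBlaschkeQuotient (hB : IsBlaschke m B) : IsBlaschkeQuotient m B := by
  simpa using hB.comp_isBlaschkeQuotient IsBlaschkeQuotient.id (mapsTo_id _)

theorem mapsTo (hB : IsBlaschke m B) (hm : 0 < m) : MapsTo B 𝔻 𝔻 := by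
  obtain ⟨ω, a, hω, ha, hB⟩ := hB
  intro z hz
  have hfac : ∀ j, ‖blaschkeFactor (a j) z‖ < 1 := fun j =>
    norm_blaschkeFactor_lt_one (mem_𝔻.mp (ha j)) (mem_𝔻.mp hz)
  obtain ⟨m, rfl⟩ := Nat.exists_eq_add_one_of_ne_zero hm.ne'
  rw [mem_𝔻, hB z hz, norm_mul, hω, one_mul, norm_prod, Fin.prod_univ_succ]
  exact mul_lt_one_of_nonneg_of_lt_one_left (norm_nonneg _) (hfac 0)
    (Finset.prod_le_one (fun _ _ => norm_nonneg _) fun j _ => (hfac j.succ).le)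

end IsBlaschke

theorem stmt2_general {n : ℕ} (D : Set (Fin n → ℂ))
    (f : ℂ → Fin n → ℂ) (F : (Fin n → ℂ) → ℂ)
    (hf : DifferentiableOn ℂ f 𝔻) (hfD : ∀ z ∈ 𝔻, f z ∈ D)
    (hF : DifferentiableOn ℂ F D) (hFD : ∀ w ∈ D, F w ∈ 𝔻)
    (m k : ℕ) (hk : 1 ≤ k)
    (hB : IsBlaschke m (fun z => F (f z)))
    (B₁ : ℂ → ℂ) (hB₁ : IsBlaschke k B₁) :
    IsMExtremal D (m * k + 1) (fun z => f (B₁ z)) := by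
  have hB₁𝔻 := hB₁.mapsTo hk
  refine ⟨hf.comp hB₁.isBlaschkeQuotient.differentiableOn hB₁𝔻, fun z hz => hfD _ (hB₁𝔻 hz), ?_⟩
  rintro lam hlam hlam𝔻 ⟨U, g, hU, hUdisc, hg, hgD, hgf⟩
  have hFg : AnalyticOnNhd ℂ (fun z => F (g z)) (closedBall 0 1) :=
    ((analyticOnNhd_iff_differentiableOn hU).mpr (hF.comp hg hgD)).mono hUdisc
  obtain ⟨j, hj⟩ := (hB.comp_isBlaschkeQuotient hB₁.isBlaschkeQuotient hB₁𝔻).exists_apply_ne hFg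
    (fun z hz => hFD _ (hgD z (hUdisc hz))) hlam hlam𝔻
  exact hj (congrArg F (hgf j))

theorem stmt2 {n : ℕ} (D : Set (Fin n → ℂ)) (hDo : IsOpen D) (hDc : IsConnected D)
    (f : ℂ → Fin n → ℂ) (F : (Fin n → ℂ) → ℂ)
    (hf : DifferentiableOn ℂ f 𝔻) (hfD : ∀ z ∈ 𝔻, f z ∈ D)
    (hF : DifferentiableOn ℂ F D) (hFD : ∀ w ∈ D, F w ∈ 𝔻)
    (m k : ℕ) (hm : 1 ≤ m) (hk : 1 ≤ k)
    (hB : IsBlaschke m (fun z => F (f z)))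
    (B₁ : ℂ → ℂ) (hB₁ : IsBlaschke k B₁) :
    IsMExtremal D (m * k + 1) (fun z => f (B₁ z)) :=
  stmt2_general D f F hf hfD hF hFD m k hk hB B₁ hB₁
end
end

section
/- Let ℛ be a bounded, convex, balanced domain in ℂⁿ on which the group of holomorphic automorphisms acts transitively (e.g. a classical Cartan domain). Then every weak m-extremal map f : 𝔻 → ℛ is a proper map, i.e. μ_ℛ(f(λ)) → 1 as |λ| → 1, where μ_ℛ is the Minkowski functional of ℛ. -/
open Complex Metric Set

noncomputable section

variable {E : Type*} [NormedAddCommGroup E] [NormedSpace ℂ E]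

/-!
The Minkowski functional `mink R` is Mathlib's `gauge R`. Induction on the number of points: an
automorphism `Φ` of `R` with `Φ (f λ₀) = 0` and the Möbius involution exchanging `λ₀` and `0`
preserve weak extremality, and both are proper, so we may assume `λ₀ = 0` and `f 0 = 0`. Then
`f z = z • ψ z` with `ψ = dslope f 0`, and `gauge R (f z) = ‖z‖ * gauge R (ψ z)`.
If `ψ` maps `𝔻` into `R`, an interpolant `h` of `ψ` at the other points would give the
interpolant `z ↦ z • h z` of `f`, so `ψ` is weakly extremal for them and proper by induction.
Otherwise `ψ z₀ ∈ ∂R` for some `z₀`; a functional `L` supporting `R` at `ψ z₀` has `‖L ∘ ψ‖ ≤ 1`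
by the Schwarz lemma with equality at `z₀`, so `L ∘ ψ` is a unimodular constant and
`gauge R (f z) ≥ ‖L (f z)‖ = ‖z‖`.
-/

open Filter Topology
open scoped ComplexConjugate

section Gauge

variable {R : Set E}

theorem mink_eq_gauge (D : Set E) : mink D = gauge D := by
  ext z
  simp only [mink, gauge]
  congr 1
  ext t
  refine and_congr_right fun ht => ?_
  rw [mem_smul_set_iff_inv_smul_mem₀ ht.ne', ← Complex.ofReal_inv, Complex.coe_smul]

theorem Balanced.norm_le_of_forall_re_le (hR : Balanced ℂ R) (L : StrongDual ℂ E) {u : ℝ}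
    (hL : ∀ w ∈ R, (L w).re ≤ u) {w : E} (hw : w ∈ R) : ‖L w‖ ≤ u := by
  rcases eq_or_ne (L w) 0 with hLw | hLw
  · simpa [hLw] using hL w hw
  set c : ℂ := ‖L w‖ / L w
  have hc : ‖c‖ = 1 := by simp [c, hLw]
  have hLcw : L (c • w) = ‖L w‖ := by simp [c, hLw]
  simpa [hLcw] using hL _ (hR.smul_mem hc.le hw)

theorem norm_le_gauge_of_forall_norm_le_one (hR : Absorbent ℝ R) (L : StrongDual ℂ E)
    (hL : ∀ w ∈ R, ‖L w‖ ≤ 1) (w : E) : ‖L w‖ ≤ gauge R w := by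
  refine le_of_forall_gt_imp_ge_of_dense fun a ha => ?_
  obtain ⟨b, hb, hba, v, hv, rfl⟩ := exists_lt_of_gauge_lt hR ha
  calc ‖L (b • v)‖ = b * ‖L v‖ := by
        rw [← Complex.coe_smul, map_smul, norm_smul, Complex.norm_real, Real.norm_of_nonneg hb.le]
    _ ≤ b * 1 := by gcongr; exact hL v hv
    _ ≤ a := by linarith

theorem setOf_gauge_le_subset (hRo : IsOpen R) (hconv : Convex ℝ R) (h0 : (0 : E) ∈ R)
    {s : ℝ} (hs : s < 1) : {w | gauge R w ≤ s} ⊆ R :=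
  fun _ hw => setOfPred_gauge_lt_one_subset_self hconv h0 (absorbent_nhds_zero (hRo.mem_nhds h0))
    (lt_of_le_of_lt hw hs)

theorem isCompact_setOf_gauge_le [ProperSpace E] (hRo : IsOpen R) (hconv : Convex ℝ R)
    (h0 : (0 : E) ∈ R) (hbd : Bornology.IsBounded R) {s : ℝ} (hs : s < 1) :
    IsCompact {w | gauge R w ≤ s} :=
  Metric.isCompact_of_isClosed_isBounded
    (isClosed_le (continuous_gauge hconv (hRo.mem_nhds h0)) continuous_const)
    (hbd.subset (setOf_gauge_le_subset hRo hconv h0 hs))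

theorem IsCompact.exists_forall_gauge_le {K : Set E} (hK : IsCompact K) (hRo : IsOpen R)
    (hconv : Convex ℝ R) (h0 : (0 : E) ∈ R) (hKR : K ⊆ R) :
    ∃ s ∈ Ioo (0 : ℝ) 1, ∀ w ∈ K, gauge R w ≤ s := by
  rcases K.eq_empty_or_nonempty with rfl | hne
  · exact ⟨1 / 2, by norm_num, by simp⟩
  obtain ⟨w₀, hw₀, hmax⟩ :=
    hK.exists_isMaxOn hne (continuous_gauge hconv (hRo.mem_nhds h0)).continuousOn
  refine ⟨max (gauge R w₀) (1 / 2), ⟨by positivity, max_lt ?_ (by norm_num)⟩,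
    fun w hw => (hmax hw).trans (le_max_left _ _)⟩
  exact gauge_lt_one_of_mem_of_isOpen hRo (hKR hw₀)

theorem tendsto_gauge_of_tendsto_gauge_comp [ProperSpace E] (hRo : IsOpen R)
    (hconv : Convex ℝ R) (h0 : (0 : E) ∈ R) (hbd : Bornology.IsBounded R)
    {Φ : E → E} (hΦc : ContinuousOn Φ R) (hΦR : MapsTo Φ R R) {α : Type*} {l : Filter α}
    {g : α → E} (hg : ∀ᶠ x in l, g x ∈ R) (h : Tendsto (fun x => gauge R (Φ (g x))) l (𝓝 1)) :
    Tendsto (fun x => gauge R (g x)) l (𝓝 1) := by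
  refine tendsto_order.2 ⟨fun s hs => ?_, fun s hs =>
    hg.mono fun x hx => (gauge_lt_one_of_mem_of_isOpen hRo hx).trans hs⟩
  have hKR := setOf_gauge_le_subset hRo hconv h0 hs
  obtain ⟨s', ⟨-, hs'⟩, hs'K⟩ :=
    ((isCompact_setOf_gauge_le hRo hconv h0 hbd hs).image_of_continuousOn
      (hΦc.mono hKR)).exists_forall_gauge_le hRo hconv h0 (image_subset_iff.2 (hKR.trans hΦR))
  filter_upwards [(tendsto_order.1 h).1 s' hs'] with x hx
  by_contra! hxs
  exact hx.not_ge (hs'K _ (mem_image_of_mem Φ hxs))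

end Gauge

section Disc

theorem zero_mem_𝔻 : (0 : ℂ) ∈ 𝔻 := mem_ball_self one_pos

def nearUnitCircle : Filter ℂ := comap (‖·‖) (𝓝[<] 1)

theorem tendsto_norm_nearUnitCircle : Tendsto (‖·‖) nearUnitCircle (𝓝[<] 1) :=
  tendsto_comap

theorem eventually_mem_𝔻_nearUnitCircle : ∀ᶠ z in nearUnitCircle, z ∈ 𝔻 :=
  tendsto_norm_nearUnitCircle.eventually eventually_mem_nhdsWithin |>.mono
    fun _ hz => mem_ball_zero_iff.2 hz

theorem Filter.Tendsto.exists_radius_of_nearUnitCircle {u : ℂ → ℝ}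
    (hu : Tendsto u nearUnitCircle (𝓝 1)) {ε : ℝ} (hε : 0 < ε) :
    ∃ r : ℝ, 0 ≤ r ∧ r < 1 ∧ ∀ z ∈ 𝔻, r < ‖z‖ → 1 - ε < u z := by
  obtain ⟨r, hr1, hr⟩ := ((nhdsLT_basis (1 : ℝ)).comap (‖·‖)).eventually_iff.1
    (hu.eventually (lt_mem_nhds (sub_lt_self 1 hε)))
  exact ⟨max r 0, le_max_right _ _, max_lt hr1 one_pos, fun z hz hrz =>
    hr ⟨(le_max_left _ _).trans_lt hrz, mem_ball_zero_iff.1 hz⟩⟩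

def mobius (a z : ℂ) : ℂ := (a - z) / (1 - conj a * z)

variable {a z : ℂ}

theorem mobius_zero_right : mobius a 0 = a := by simp [mobius]

theorem mobius_self : mobius a a = 0 := by simp [mobius]

theorem sq_norm_one_sub_conj_mul_sub_sq_norm_sub (a z : ℂ) :
    ‖1 - conj a * z‖ ^ 2 - ‖a - z‖ ^ 2 = (1 - ‖a‖ ^ 2) * (1 - ‖z‖ ^ 2) := by
  simp only [Complex.sq_norm, Complex.normSq_apply, Complex.sub_re, Complex.sub_im,
    Complex.mul_re, Complex.mul_im, Complex.conj_re, Complex.conj_im, Complex.one_re,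
    Complex.one_im]
  ring

theorem one_sub_norm_le_norm_one_sub_conj_mul (hz : ‖z‖ ≤ 1) : 1 - ‖a‖ ≤ ‖1 - conj a * z‖ :=
  calc 1 - ‖a‖ ≤ 1 - ‖conj a * z‖ := by
        rw [norm_mul, Complex.norm_conj]; nlinarith [norm_nonneg a, norm_nonneg z]
    _ ≤ ‖1 - conj a * z‖ := by simpa using norm_sub_norm_le 1 (conj a * z)

theorem norm_one_sub_conj_mul_pos (ha : ‖a‖ < 1) (hz : ‖z‖ ≤ 1) : 0 < ‖1 - conj a * z‖ :=
  (sub_pos.2 ha).trans_le (one_sub_norm_le_norm_one_sub_conj_mul hz)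

theorem norm_mobius_le_one (ha : ‖a‖ < 1) (hz : ‖z‖ ≤ 1) : ‖mobius a z‖ ≤ 1 := by
  rw [mobius, norm_div, div_le_one (norm_one_sub_conj_mul_pos ha hz)]
  refine le_of_pow_le_pow_left₀ two_ne_zero (norm_nonneg _) ?_
  have ha' : 0 ≤ 1 - ‖a‖ ^ 2 := sub_nonneg.2 (pow_le_one₀ (norm_nonneg a) ha.le)
  have hz' : 0 ≤ 1 - ‖z‖ ^ 2 := sub_nonneg.2 (pow_le_one₀ (norm_nonneg z) hz)
  linarith [sq_norm_one_sub_conj_mul_sub_sq_norm_sub a z, mul_nonneg ha' hz']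

theorem norm_mobius_lt_one (ha : ‖a‖ < 1) (hz : ‖z‖ < 1) : ‖mobius a z‖ < 1 := by
  rw [mobius, norm_div, div_lt_one (norm_one_sub_conj_mul_pos ha hz.le)]
  refine lt_of_pow_lt_pow_left₀ 2 (norm_nonneg _) ?_
  have ha' : 0 < 1 - ‖a‖ ^ 2 := sub_pos.2 (pow_lt_one₀ (norm_nonneg a) ha two_ne_zero)
  have hz' : 0 < 1 - ‖z‖ ^ 2 := sub_pos.2 (pow_lt_one₀ (norm_nonneg z) hz two_ne_zero)
  linarith [sq_norm_one_sub_conj_mul_sub_sq_norm_sub a z, mul_pos ha' hz']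

theorem mapsTo_mobius (ha : ‖a‖ < 1) : MapsTo (mobius a) 𝔻 𝔻 := fun _ hz =>
  mem_ball_zero_iff.2 (norm_mobius_lt_one ha (mem_ball_zero_iff.1 hz))

theorem mobius_mobius (ha : ‖a‖ < 1) (hz : ‖z‖ ≤ 1) : mobius a (mobius a z) = z := by
  have hz' := norm_ne_zero_iff.1 (norm_one_sub_conj_mul_pos ha hz).ne'
  have ha' := norm_ne_zero_iff.1 (norm_one_sub_conj_mul_pos ha ha.le).ne'
  have hnum : a - mobius a z = z * (1 - conj a * a) / (1 - conj a * z) := by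
    rw [mobius, eq_div_iff hz', sub_mul, div_mul_cancel₀ _ hz']; ring
  have hden : 1 - conj a * mobius a z = (1 - conj a * a) / (1 - conj a * z) := by
    rw [mobius, eq_div_iff hz', sub_mul, mul_assoc, div_mul_cancel₀ _ hz']; ring
  rw [mobius, hnum, hden, div_div_div_cancel_right₀ hz', mul_div_cancel_right₀ _ ha']

theorem one_sub_sq_norm_mobius_le (ha : ‖a‖ < 1) (hz : ‖z‖ ≤ 1) :
    1 - ‖mobius a z‖ ^ 2 ≤ (1 + ‖a‖) / (1 - ‖a‖) * (1 - ‖z‖ ^ 2) := by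
  set d := ‖1 - conj a * z‖
  have hd0 : 0 < d := norm_one_sub_conj_mul_pos ha hz
  have hsq : (1 - ‖a‖) ^ 2 ≤ d ^ 2 :=
    pow_le_pow_left₀ (sub_pos.2 ha).le (one_sub_norm_le_norm_one_sub_conj_mul hz) 2
  have hw : d ^ 2 * (1 - ‖mobius a z‖ ^ 2) = (1 - ‖a‖) * ((1 + ‖a‖) * (1 - ‖z‖ ^ 2)) := by
    rw [mobius, norm_div, div_pow, mul_sub, mul_div_cancel₀ _ (by positivity)]
    linear_combination sq_norm_one_sub_conj_mul_sub_sq_norm_sub a z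
  have hw0 : 0 ≤ 1 - ‖mobius a z‖ ^ 2 :=
    sub_nonneg.2 (pow_le_one₀ (norm_nonneg _) (norm_mobius_le_one ha hz))
  rw [div_mul_eq_mul_div, le_div_iff₀ (sub_pos.2 ha)]
  refine le_of_mul_le_mul_left ?_ (sub_pos.2 ha)
  calc (1 - ‖a‖) * ((1 - ‖mobius a z‖ ^ 2) * (1 - ‖a‖))
      = (1 - ‖a‖) ^ 2 * (1 - ‖mobius a z‖ ^ 2) := by ring
    _ ≤ d ^ 2 * (1 - ‖mobius a z‖ ^ 2) := mul_le_mul_of_nonneg_right hsq hw0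
    _ = (1 - ‖a‖) * ((1 + ‖a‖) * (1 - ‖z‖ ^ 2)) := hw

theorem tendsto_mobius_nearUnitCircle (ha : ‖a‖ < 1) :
    Tendsto (mobius a) nearUnitCircle nearUnitCircle := by
  have hdisc : ∀ᶠ z in nearUnitCircle, ‖z‖ ≤ 1 :=
    eventually_mem_𝔻_nearUnitCircle.mono fun _ hz => (mem_ball_zero_iff.1 hz).le
  refine tendsto_comap_iff.2 (tendsto_nhdsWithin_iff.2 ⟨?_, ?_⟩)
  · have hlow : Tendsto (fun z : ℂ => 1 - (1 + ‖a‖) / (1 - ‖a‖) * (1 - ‖z‖ ^ 2))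
        nearUnitCircle (𝓝 1) := by
      simpa using ((((tendsto_norm_nearUnitCircle.mono_right nhdsWithin_le_nhds).pow 2).const_sub
        1).const_mul ((1 + ‖a‖) / (1 - ‖a‖))).const_sub 1
    refine tendsto_of_tendsto_of_tendsto_of_le_of_le' hlow tendsto_const_nhds ?_ ?_
    · filter_upwards [hdisc] with z hz
      have hw := norm_mobius_le_one ha hz
      change _ ≤ ‖mobius a z‖
      nlinarith [one_sub_sq_norm_mobius_le ha hz, norm_nonneg (mobius a z)]
    · filter_upwards [hdisc] with z hz
      exact norm_mobius_le_one ha hz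
  · filter_upwards [eventually_mem_𝔻_nearUnitCircle] with z hz
    exact norm_mobius_lt_one ha (mem_ball_zero_iff.1 hz)

end Disc

section WeakExtremal

variable {D : Set E} {m : ℕ} {lam : Fin m → ℂ} {f : ℂ → E}

theorem not_extSolv_of_nonempty (hD : D.Nonempty) (lam : Fin 0 → ℂ) (f : ℂ → E) :
    ¬ ExtSolv D lam f := by
  obtain ⟨w, hw⟩ := hD
  exact fun h => h ⟨univ, fun _ => w, isOpen_univ, subset_univ _, differentiableOn_const w,
    fun _ _ => hw, finZeroElim⟩

theorem IsWeakExtremal.comp_automorphism (hf : IsWeakExtremal D lam f) {Φ : E → E}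
    (hΦ : IsAutomorphismOf D Φ) (hlam : ∀ j, lam j ∈ 𝔻) : IsWeakExtremal D lam (Φ ∘ f) := by
  obtain ⟨hfd, hfD, hext⟩ := hf
  obtain ⟨hΦd, hΦD, Ψ, hΨd, hΨD, hΨΦ, -⟩ := hΦ
  refine ⟨hΦd.comp hfd hfD, fun z hz => hΦD (hfD z hz), ?_⟩
  rintro ⟨U, g, hUo, hU, hgd, hgD, hg⟩
  refine hext ⟨U, Ψ ∘ g, hUo, hU, hΨd.comp hgd hgD, fun z hz => hΨD (hgD z hz), fun j => ?_⟩
  rw [Function.comp_apply, hg j, Function.comp_apply, hΨΦ _ (hfD _ (hlam j))]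

theorem IsWeakExtremal.comp_mobius (hf : IsWeakExtremal D lam f) {a : ℂ} (ha : ‖a‖ < 1)
    (hlam : ∀ j, lam j ∈ 𝔻) : IsWeakExtremal D (mobius a ∘ lam) (f ∘ mobius a) := by
  obtain ⟨hfd, hfD, hext⟩ := hf
  set Ω := {z : ℂ | 1 - conj a * z ≠ 0}
  have hΩ : closedBall (0 : ℂ) 1 ⊆ Ω := fun z hz =>
    norm_ne_zero_iff.1 (norm_one_sub_conj_mul_pos ha (mem_closedBall_zero_iff.1 hz)).ne'
  have hmob : DifferentiableOn ℂ (mobius a) Ω :=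
    DifferentiableOn.div (by fun_prop) (by fun_prop) fun _ hz => hz
  refine ⟨hfd.comp (hmob.mono (ball_subset_closedBall.trans hΩ)) (mapsTo_mobius ha),
    fun z hz => hfD _ (mapsTo_mobius ha hz), ?_⟩
  rintro ⟨U, g, hUo, hU, hgd, hgD, hg⟩
  refine hext ⟨Ω ∩ mobius a ⁻¹' U, g ∘ mobius a,
    hmob.continuousOn.isOpen_inter_preimage (isOpen_ne_fun (by fun_prop) (by fun_prop)) hUo,
    fun z hz => ⟨hΩ hz, hU (mem_closedBall_zero_iff.2 (norm_mobius_le_one ha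
      (mem_closedBall_zero_iff.1 hz)))⟩,
    hgd.comp (hmob.mono inter_subset_left) fun _ hz => hz.2, fun z hz => hgD _ hz.2,
    fun j => ?_⟩
  have hj := hg j
  simp only [Function.comp_apply] at hj ⊢
  rw [hj, mobius_mobius ha (mem_ball_zero_iff.1 (hlam j)).le]

end WeakExtremal

section Dslope

variable {R : Set E} {F : ℂ → E}

theorem norm_clm_dslope_le_one (hF : DifferentiableOn ℂ F 𝔻) (hFR : MapsTo F 𝔻 R)
    (hF0 : F 0 = 0) (L : StrongDual ℂ E) (hL : ∀ w ∈ R, ‖L w‖ ≤ 1) {z : ℂ} (hz : z ∈ 𝔻) :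
    ‖L (dslope F 0 z)‖ ≤ 1 := by
  rw [← L.dslope_comp F 0 z fun _ => hF.differentiableAt (isOpen_ball.mem_nhds zero_mem_𝔻)]
  simpa using Complex.norm_dslope_le_div_of_mapsTo_ball (L.differentiable.comp_differentiableOn hF)
    (fun w hw => by simpa [hF0] using hL _ (hFR hw)) hz

theorem norm_le_gauge_of_dslope_notMem [CompleteSpace E] (hRo : IsOpen R) (hconv : Convex ℝ R)
    (hbal : Balanced ℂ R) (hF : DifferentiableOn ℂ F 𝔻) (hFR : MapsTo F 𝔻 R) (hF0 : F 0 = 0)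
    {z₀ : ℂ} (hz₀ : z₀ ∈ 𝔻) (hψ : dslope F 0 z₀ ∉ R) {z : ℂ} (hz : z ∈ 𝔻) :
    ‖z‖ ≤ gauge R (F z) := by
  have h0 : (0 : E) ∈ R := hF0 ▸ hFR zero_mem_𝔻
  obtain ⟨L, hLz₀, hLR⟩ := RCLike.separate_convex_open_set (𝕜 := ℂ) h0 hconv hRo hψ
  replace hLz₀ : (L (dslope F 0 z₀)).re = 1 := hLz₀
  have hL : ∀ w ∈ R, ‖L w‖ ≤ 1 := fun w hw =>
    hbal.norm_le_of_forall_re_le L (fun v hv => (hLR v hv).le) hw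
  have hmax : IsMaxOn (norm ∘ fun z => L (dslope F 0 z)) 𝔻 z₀ := fun z hz =>
    (norm_clm_dslope_le_one hF hFR hF0 L hL hz).trans (hLz₀ ▸ Complex.re_le_norm _)
  have hconst := Complex.eqOn_of_isPreconnected_of_isMaxOn_norm
    (convex_ball (0 : ℂ) 1).isPreconnected isOpen_ball (L.differentiable.comp_differentiableOn
      ((Complex.differentiableOn_dslope (isOpen_ball.mem_nhds zero_mem_𝔻)).2 hF)) hz₀ hmax hz
  calc ‖z‖ = ‖z‖ * (L (dslope F 0 z₀)).re := by simp [hLz₀]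
    _ ≤ ‖z‖ * ‖L (dslope F 0 z₀)‖ := by gcongr; exact Complex.re_le_norm _
    _ = ‖L (F z)‖ := by
      rw [← sub_smul_dslope_of_zero hF0 z, sub_zero, map_smul, norm_smul]
      exact congrArg (‖z‖ * ‖·‖) hconst.symm
    _ ≤ gauge R (F z) :=
      norm_le_gauge_of_forall_norm_le_one (absorbent_nhds_zero (hRo.mem_nhds h0)) L hL _

theorem IsWeakExtremal.dslope [CompleteSpace E] (hRo : IsOpen R) (hconv : Convex ℝ R)
    (hbal : Balanced ℂ R) {m : ℕ} {lam : Fin (m + 1) → ℂ} (hF : IsWeakExtremal R lam F)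
    (hlam0 : lam 0 = 0) (hF0 : F 0 = 0) (hψ : ∀ z ∈ 𝔻, dslope F 0 z ∈ R) :
    IsWeakExtremal R (Fin.tail lam) (dslope F 0) := by
  obtain ⟨hFd, hFR, hext⟩ := hF
  have h0 : (0 : E) ∈ R := hF0 ▸ hFR 0 zero_mem_𝔻
  refine ⟨(Complex.differentiableOn_dslope (isOpen_ball.mem_nhds zero_mem_𝔻)).2 hFd, hψ, ?_⟩
  rintro ⟨U, h, hUo, hU, hhd, hhR, hh⟩
  obtain ⟨δ, hδ, hδU⟩ := (isCompact_closedBall (0 : ℂ) 1).exists_cthickening_subset_open hUo hU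
  rw [cthickening_closedBall hδ.le zero_le_one] at hδU
  obtain ⟨s, ⟨hs0, hs1⟩, hs⟩ := ((isCompact_closedBall (0 : ℂ) (δ + 1)).image_of_continuousOn
    (hhd.continuousOn.mono hδU)).exists_forall_gauge_le hRo hconv h0
    (image_subset_iff.2 fun z hz => hhR z (hδU hz))
  -- `gauge R (z • h z) ≤ ‖z‖ * s < 1` on the disc of radius `ρ > 1`: a competitor for `F`
  set ρ := min (δ + 1) s⁻¹
  refine hext ⟨ball 0 ρ, fun z => z • h z, isOpen_ball,
    closedBall_subset_ball (lt_min (by linarith) (one_lt_inv₀ hs0 |>.2 hs1)),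
    differentiableOn_id.smul (hhd.mono (ball_subset_closedBall.trans
      ((closedBall_subset_closedBall (min_le_left _ _)).trans hδU))), fun z hz => ?_, ?_⟩
  · have hz' : ‖z‖ < ρ := mem_ball_zero_iff.1 hz
    refine setOfPred_gauge_lt_one_subset_self hconv h0 (absorbent_nhds_zero (hRo.mem_nhds h0)) ?_
    calc gauge R (z • h z) = ‖z‖ * gauge R (h z) := gauge_smul hbal z (h z)
      _ ≤ ‖z‖ * s := by
        gcongr
        exact hs _ (mem_image_of_mem h (mem_closedBall_zero_iff.2
          (hz'.le.trans (min_le_left _ _))))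
      _ < s⁻¹ * s := by gcongr; exact hz'.trans_le (min_le_right _ _)
      _ = 1 := inv_mul_cancel₀ hs0.ne'
  · refine Fin.cases ?_ fun i => ?_
    · simp [hlam0, hF0]
    · rw [← sub_smul_dslope_of_zero hF0 (lam i.succ), sub_zero]
      exact congrArg (lam i.succ • ·) (hh i)

end Dslope

section Properness

variable {R : Set E}

theorem tendsto_gauge_of_isWeakExtremal_of_map_zero [CompleteSpace E] (hRo : IsOpen R)
    (hconv : Convex ℝ R) (hbal : Balanced ℂ R) {m : ℕ}
    (ih : ∀ (lam : Fin m → ℂ) (ψ : ℂ → E), (∀ j, lam j ∈ 𝔻) → IsWeakExtremal R lam ψ →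
      Tendsto (fun z => gauge R (ψ z)) nearUnitCircle (𝓝 1))
    {lam : Fin (m + 1) → ℂ} {F : ℂ → E} (hlam : ∀ j, lam j ∈ 𝔻) (hF : IsWeakExtremal R lam F)
    (hlam0 : lam 0 = 0) (hF0 : F 0 = 0) :
    Tendsto (fun z => gauge R (F z)) nearUnitCircle (𝓝 1) := by
  have hnorm : Tendsto (‖·‖) nearUnitCircle (𝓝 1) :=
    tendsto_norm_nearUnitCircle.mono_right nhdsWithin_le_nhds
  by_cases hψ : ∀ z ∈ 𝔻, dslope F 0 z ∈ R
  · have hψt := ih _ _ (fun j => hlam j.succ) (hF.dslope hRo hconv hbal hlam0 hF0 hψ)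
    have hFψ : (fun z => gauge R (F z)) = fun z => ‖z‖ * gauge R (dslope F 0 z) :=
      funext fun z => by rw [← sub_smul_dslope_of_zero hF0 z, sub_zero, gauge_smul hbal]
    simpa [hFψ] using hnorm.mul hψt
  · obtain ⟨z₀, hz₀, hψz₀⟩ := not_forall₂.1 hψ
    refine tendsto_of_tendsto_of_tendsto_of_le_of_le' hnorm tendsto_const_nhds ?_ ?_
    · filter_upwards [eventually_mem_𝔻_nearUnitCircle] with z hz
      exact norm_le_gauge_of_dslope_notMem hRo hconv hbal hF.1 hF.2.1 hF0 hz₀ hψz₀ hz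
    · filter_upwards [eventually_mem_𝔻_nearUnitCircle] with z hz
      exact gauge_le_one_of_mem (hF.2.1 z hz)

theorem IsWeakExtremal.tendsto_gauge [ProperSpace E] (hRo : IsOpen R)
    (hbd : Bornology.IsBounded R) (hconv : Convex ℝ R) (hbal : Balanced ℂ R)
    (hhom : Homogeneous R) {m : ℕ} {lam : Fin m → ℂ} {f : ℂ → E} (hlam : ∀ j, lam j ∈ 𝔻)
    (hf : IsWeakExtremal R lam f) : Tendsto (fun z => gauge R (f z)) nearUnitCircle (𝓝 1) := by
  have h0 : (0 : E) ∈ R := hbal.zero_mem ⟨_, hf.2.1 0 zero_mem_𝔻⟩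
  induction m generalizing f with
  | zero => exact absurd hf.2.2 (not_extSolv_of_nonempty ⟨0, h0⟩ lam f)
  | succ m ih =>
    set a := lam 0
    have ha : ‖a‖ < 1 := mem_ball_zero_iff.1 (hlam 0)
    obtain ⟨Φ, hΦ, hΦa⟩ := hhom _ (hf.2.1 a (hlam 0)) 0 h0
    have hFt := tendsto_gauge_of_isWeakExtremal_of_map_zero hRo hconv hbal (fun _ _ => ih)
      (fun j => mapsTo_mobius ha (hlam j)) ((hf.comp_automorphism hΦ hlam).comp_mobius ha hlam)
      mobius_self (by simp only [Function.comp_apply, mobius_zero_right, hΦa])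
    refine tendsto_gauge_of_tendsto_gauge_comp hRo hconv h0 hbd hΦ.1.continuousOn hΦ.2.1
      (eventually_mem_𝔻_nearUnitCircle.mono hf.2.1) ((hFt.comp
        (tendsto_mobius_nearUnitCircle ha)).congr' ?_)
    filter_upwards [eventually_mem_𝔻_nearUnitCircle] with z hz
    simp [mobius_mobius ha (mem_ball_zero_iff.1 hz).le]

end Properness

theorem stmt5_general {n : ℕ} (R : Set (Fin n → ℂ)) (hRo : IsOpen R)
    (hbd : Bornology.IsBounded R) (hconv : Convex ℝ R) (hbal : Balanced ℂ R)
    (hhom : Homogeneous R)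
    (m : ℕ) (f : ℂ → Fin n → ℂ)
    (lam : Fin m → ℂ) (hmem : ∀ j, lam j ∈ 𝔻)
    (hf : IsWeakExtremal R lam f) :
    ∀ ε > (0 : ℝ), ∃ r : ℝ, 0 ≤ r ∧ r < 1 ∧ ∀ z ∈ 𝔻, r < ‖z‖ → 1 - ε < mink R (f z) := by
  rw [mink_eq_gauge]
  exact fun ε hε =>
    (hf.tendsto_gauge hRo hbd hconv hbal hhom hmem).exists_radius_of_nearUnitCircle hε

theorem stmt5 {n : ℕ} (R : Set (Fin n → ℂ)) (hRo : IsOpen R) (hRc : IsConnected R)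
    (hbd : Bornology.IsBounded R) (hconv : Convex ℝ R) (hbal : Balanced ℂ R)
    (hhom : Homogeneous R)
    (m : ℕ) (hm : 2 ≤ m) (f : ℂ → Fin n → ℂ)
    (lam : Fin m → ℂ) (hinj : Function.Injective lam) (hmem : ∀ j, lam j ∈ 𝔻)
    (hf : IsWeakExtremal R lam f) :
    ∀ ε > (0 : ℝ), ∃ r : ℝ, 0 ≤ r ∧ r < 1 ∧ ∀ z ∈ 𝔻, r < ‖z‖ → 1 - ε < mink R (f z) :=
  stmt5_general R hRo hbd hconv hbal hhom m f lam hmem hf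

end
end
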